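/- arXiv:1708.01910 — 2 statements merged into one kernel-verified Lean document; each statement's English description precedes it below -/
import Mathlib

section
/- Let a_{21} > a_{11} > a_{22} > a_{12} be real numbers, set b_{ij} = a_{ji} (a symmetric prisoner's dilemma), and let λ_{11} = λ_{22} = 1. If min(λ_{12}, λ_{21}) > (a_{21} − a_{11})/(a_{11} − a_{12}), then the action profile (1,1) is a strict pure Nash equilibrium of the empathetic game G_Λ; that is, the empathetic version of the game selects the social-welfare profile (1,1). -/
/- Deviating from mutual cooperation gains the temptation `a - b` but, weighted by the empathy `l`,
costs the opponent's sucker loss `b - c`. -/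
lemma add_mul_lt_add_mul_of_div_lt {a b c l : ℝ} (hcb : c < b) (hl : (a - b) / (b - c) < l) :
    a + l * c < b + l * b := by
  have h := (div_lt_iff₀ (sub_pos.2 hcb)).1 hl
  linear_combination h

theorem stmt2_general (a11 a12 a21 a22 b11 b12 b21 l11 l12 l21 l22 : ℝ)
    (hpd2 : a11 > a22) (hpd3 : a22 > a12)
    (hb11 : b11 = a11) (hb12 : b12 = a21) (hb21 : b21 = a12)
    (hl11 : l11 = 1) (hl22 : l22 = 1)
    (hl : min l12 l21 > (a21 - a11) / (a11 - a12)) :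
    (l11 * a11 + l12 * b11 > l11 * a21 + l12 * b21) ∧
    (l22 * b11 + l21 * a11 > l22 * b12 + l21 * a12) := by
  simp only [hb11, hb12, hb21, hl11, hl22, one_mul, gt_iff_lt]
  obtain ⟨h12, h21⟩ := lt_min_iff.1 hl
  have ha : a12 < a11 := hpd3.trans hpd2
  exact ⟨add_mul_lt_add_mul_of_div_lt ha h12, add_mul_lt_add_mul_of_div_lt ha h21⟩

/-- In a symmetric prisoner's dilemma with λ11 = λ22 = 1 and
min(λ12, λ21) > (a21 − a11)/(a11 − a12), the profile (1,1) is a strict pure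
Nash equilibrium of the empathetic game G_Λ: the row player strictly prefers
action 1 against action 1 (a^Λ_11 > a^Λ_21) and the column player strictly
prefers action 1 against action 1 (b^Λ_11 > b^Λ_12). -/
theorem stmt2 (a11 a12 a21 a22 b11 b12 b21 b22 l11 l12 l21 l22 : ℝ)
    (hpd1 : a21 > a11) (hpd2 : a11 > a22) (hpd3 : a22 > a12)
    (hb11 : b11 = a11) (hb12 : b12 = a21) (hb21 : b21 = a12) (hb22 : b22 = a22)
    (hl11 : l11 = 1) (hl22 : l22 = 1)
    (hl : min l12 l21 > (a21 - a11) / (a11 - a12)) :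
    (l11 * a11 + l12 * b11 > l11 * a21 + l12 * b21) ∧
    (l22 * b11 + l21 * a11 > l22 * b12 + l21 * a12) :=
  stmt2_general a11 a12 a21 a22 b11 b12 b21 l11 l12 l21 l22 hpd2 hpd3 hb11 hb12 hb21 hl11 hl22 hl
end

section
/- Let A be a real 2×2 matrix with β_1 = a_{11} − a_{21} > 0 and β_2 = a_{22} − a_{12} ≤ 0, and let the constraint set be C = [0, α] with 0 < α < 1. Then m* = α is the unique constrained evolutionarily stable strategy of the constrained single-population game; in particular, when α < 1 the unconstrained dominant pure strategy m = 1 is excluded and the constrained ESS α is not an ESS of the unconstrained game. -/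
/-!
Against a population state `p`, the payoff advantage of `x` over `y` is
`(x - y) * (p * β₁ - (1 - p) * β₂)`, and when `β₁ > 0 ≥ β₂` the second factor is positive for
`p ∈ (0, 1]`. So a larger strategy always earns at least as much, and strictly more as soon as the
perturbed state is nonzero: the largest admissible strategy `α` is stable, any smaller one is
invaded by `α`, and in the unconstrained game `α` itself is invaded by `1`.
-/

/-- Payoff of mixed strategy `x` against population state `m` in a single-population
game with 2×2 payoff matrix entries `a11 a12 a21 a22`. -/
def uA (a11 a12 a21 a22 x m : ℝ) : ℝ :=
  x * m * a11 + x * (1 - m) * a12 + (1 - x) * m * a21 + (1 - x) * (1 - m) * a22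

/-- `m'` is a constrained evolutionarily stable strategy w.r.t. constraint set `C`:
`m' ∈ C` and for every `m ∈ C` with `m ≠ m'` there is `ε̄ ∈ (0,1]` such that `m'`
strictly outperforms `m` against `ε m + (1 − ε) m'` for all `ε ∈ (0, ε̄)`. -/
def IsCESS (a11 a12 a21 a22 : ℝ) (C : Set ℝ) (m' : ℝ) : Prop :=
  m' ∈ C ∧ ∀ m ∈ C, m ≠ m' → ∃ εb ∈ Set.Ioc (0:ℝ) 1, ∀ ε ∈ Set.Ioo (0:ℝ) εb,
    uA a11 a12 a21 a22 m' (ε * m + (1 - ε) * m') >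
      uA a11 a12 a21 a22 m (ε * m + (1 - ε) * m')

open Set

lemma uA_sub_uA (a11 a12 a21 a22 x y p : ℝ) :
    uA a11 a12 a21 a22 x p - uA a11 a12 a21 a22 y p
      = (x - y) * (p * (a11 - a21) - (1 - p) * (a22 - a12)) := by
  simp only [uA]; ring

section Payoff

variable {a11 a12 a21 a22 : ℝ}

lemma uA_le_uA_of_le (hβ1 : 0 ≤ a11 - a21) (hβ2 : a22 - a12 ≤ 0) {x y p : ℝ} (hxy : y ≤ x)
    (hp : p ∈ Icc (0 : ℝ) 1) : uA a11 a12 a21 a22 y p ≤ uA a11 a12 a21 a22 x p := by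
  have hgain : 0 ≤ p * (a11 - a21) - (1 - p) * (a22 - a12) := by
    nlinarith [mul_nonneg hp.1 hβ1, mul_nonpos_of_nonneg_of_nonpos (sub_nonneg.2 hp.2) hβ2]
  nlinarith [uA_sub_uA a11 a12 a21 a22 x y p, mul_nonneg (sub_nonneg.2 hxy) hgain]

lemma uA_lt_uA_of_lt (hβ1 : 0 < a11 - a21) (hβ2 : a22 - a12 ≤ 0) {x y p : ℝ} (hxy : y < x)
    (hp : p ∈ Ioc (0 : ℝ) 1) : uA a11 a12 a21 a22 y p < uA a11 a12 a21 a22 x p := by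
  have hgain : 0 < p * (a11 - a21) - (1 - p) * (a22 - a12) := by
    nlinarith [mul_pos hp.1 hβ1, mul_nonpos_of_nonneg_of_nonpos (sub_nonneg.2 hp.2) hβ2]
  nlinarith [uA_sub_uA a11 a12 a21 a22 x y p, mul_pos (sub_pos.2 hxy) hgain]

end Payoff

lemma mix_mem_Icc_zero_one {ε x y : ℝ} (hε : ε ∈ Icc (0 : ℝ) 1) (hx : x ∈ Icc (0 : ℝ) 1)
    (hy : y ∈ Icc (0 : ℝ) 1) : ε * x + (1 - ε) * y ∈ Icc (0 : ℝ) 1 := by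
  simpa only [smul_eq_mul] using convex_Icc (0 : ℝ) 1 hx hy hε.1 (sub_nonneg.2 hε.2) (by ring)

lemma not_isCESS_of_forall_le {a11 a12 a21 a22 : ℝ} {C : Set ℝ} {m m' : ℝ} (hm' : m' ∈ C)
    (hne : m' ≠ m)
    (hle : ∀ ε ∈ Ioo (0 : ℝ) 1,
      uA a11 a12 a21 a22 m (ε * m' + (1 - ε) * m) ≤ uA a11 a12 a21 a22 m' (ε * m' + (1 - ε) * m)) :
    ¬ IsCESS a11 a12 a21 a22 C m := by
  rintro ⟨-, hstable⟩
  obtain ⟨εb, ⟨hεb0, hεb1⟩, hbeat⟩ := hstable m' hm' hne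
  have hhalf : εb / 2 ∈ Ioo (0 : ℝ) εb := ⟨by positivity, by linarith⟩
  exact (hle (εb / 2) ⟨hhalf.1, by linarith⟩).not_gt (hbeat _ hhalf)

section Constrained

variable {a11 a12 a21 a22 α : ℝ}

lemma isCESS_right_endpoint (hβ1 : 0 < a11 - a21) (hβ2 : a22 - a12 ≤ 0) (hα0 : 0 < α)
    (hα1 : α ≤ 1) : IsCESS a11 a12 a21 a22 (Icc 0 α) α := by
  refine ⟨right_mem_Icc.2 hα0.le, fun m hm hne => ⟨1, right_mem_Ioc.2 one_pos, fun ε hε => ?_⟩⟩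
  have hpos : 0 < ε * m + (1 - ε) * α :=
    add_pos_of_nonneg_of_pos (mul_nonneg hε.1.le hm.1) (mul_pos (sub_pos.2 hε.2) hα0)
  have hle : ε * m + (1 - ε) * α ≤ 1 :=
    (mix_mem_Icc_zero_one (Ioo_subset_Icc_self hε) ⟨hm.1, hm.2.trans hα1⟩ ⟨hα0.le, hα1⟩).2
  exact uA_lt_uA_of_lt hβ1 hβ2 (lt_of_le_of_ne hm.2 hne) ⟨hpos, hle⟩

lemma eq_right_endpoint_of_isCESS (hβ1 : 0 ≤ a11 - a21) (hβ2 : a22 - a12 ≤ 0) (hα0 : 0 ≤ α)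
    (hα1 : α ≤ 1) {m : ℝ} (hm : IsCESS a11 a12 a21 a22 (Icc 0 α) m) : m = α := by
  by_contra hne
  have hmα : m < α := lt_of_le_of_ne hm.1.2 hne
  refine not_isCESS_of_forall_le (right_mem_Icc.2 hα0) (Ne.symm hne) (fun ε hε => ?_) hm
  exact uA_le_uA_of_le hβ1 hβ2 hmα.le <| mix_mem_Icc_zero_one (Ioo_subset_Icc_self hε)
    ⟨hα0, hα1⟩ ⟨hm.1.1, hm.1.2.trans hα1⟩

end Constrained

/-- If β1 = a11 − a21 > 0, β2 = a22 − a12 ≤ 0 and C = [0, α] with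
0 < α < 1, then α is the unique constrained ESS; the unconstrained dominant pure
strategy 1 is excluded from C, and α is not an ESS of the unconstrained game
(constraint set [0,1]). -/
theorem stmt7 (a11 a12 a21 a22 α : ℝ)
    (hβ1 : a11 - a21 > 0) (hβ2 : a22 - a12 ≤ 0) (hα0 : 0 < α) (hα1 : α < 1) :
    IsCESS a11 a12 a21 a22 (Set.Icc 0 α) α ∧
    (∀ m, IsCESS a11 a12 a21 a22 (Set.Icc 0 α) m → m = α) ∧
    (1 : ℝ) ∉ Set.Icc (0:ℝ) α ∧
    ¬ IsCESS a11 a12 a21 a22 (Set.Icc 0 1) α := by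
  refine ⟨isCESS_right_endpoint hβ1 hβ2 hα0 hα1.le,
    fun m => eq_right_endpoint_of_isCESS hβ1.le hβ2 hα0.le hα1.le,
    fun h => hα1.not_ge h.2, fun h => ?_⟩
  -- In the unconstrained game the same uniqueness argument, with `α = 1`, forces `α = 1`.
  exact hα1.ne (eq_right_endpoint_of_isCESS hβ1.le hβ2 zero_le_one le_rfl h)
end
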